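/- The symmetric real bilinear form B(V,W) := (1/2)·Re(tr(V·W)) on the real vector space 𝔪 is nondegenerate of signature (p(2p−1) + q(2q−1) − 1, 4pq): 𝔪 has real dimension (2n+1)(n−1), and there exist real subspaces V₊ and V₋ of 𝔪 with 𝔪 = V₊ ⊕ V₋, B(v₊, v₋) = 0 for all v₊ ∈ V₊ and v₋ ∈ V₋, B positive definite on V₊, B negative definite on V₋, dim_ℝ V₊ = p(2p−1) + q(2q−1) − 1, and dim_ℝ V₋ = 4pq. -/

import Mathlib

/-!
Write `W = [[X, -Y], [Ȳ, X̄]]` and `S = I_{p,q}`. The defining conditions say that `SX` is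
Hermitian and `SY` is skew-symmetric; since `S² = 1` they are equivalent to `Xᴴ = SXS` and
`-Yᵀ = SYS`, so `Wᴴ` lies in `𝔪` whenever `W` does. Hence `𝔪` splits into its Hermitian part `V₊`
and its skew-Hermitian part `V₋`. For Hermitian `W` one has `Re tr (W W) = ‖W‖² > 0`, for
skew-Hermitian `W` it is `-‖W‖² < 0`, and `Re tr (A B) = 0` when `A` is Hermitian and `B`
skew-Hermitian; nondegeneracy follows by pairing `W` with `Wᴴ ∈ 𝔪`.

Dimensions: `X ↦ SX` and `Y ↦ SY` identify the `X`-part of `𝔪` with the Hermitian matrices of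
vanishing `Re tr (S ·)` (dimension `n² - 1`) and the `Y`-part with the complex skew-symmetric
matrices (dimension `n (n - 1)`). An element of `V₋` has `X` and `Y` off-diagonal with respect to
the splitting `n = p + q`, and is determined by their upper right `p × q` blocks (dimension `4pq`);
`V₊` accounts for the rest.
-/

open Matrix

/-- The diagonal matrix `I_{p,q}` with `p` ones followed by `q` minus-ones, over `ℂ`. -/
noncomputable def Ipq (p q : ℕ) : Matrix (Fin (p + q)) (Fin (p + q)) ℂ :=
  Matrix.diagonal (fun i => if (i : ℕ) < p then (1 : ℂ) else -1)

/-- The real subspace `𝔪` of block matrices `[[X, −Y],[Ȳ, X̄]]` with `tr X = 0`,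
`X†·I_{p,q} = I_{p,q}·X` and `Yᵀ·I_{p,q} + I_{p,q}·Y = 0`. -/
def mSp (p q : ℕ) :
    Set (Matrix (Fin (p + q) ⊕ Fin (p + q)) (Fin (p + q) ⊕ Fin (p + q)) ℂ) :=
  {W | ∃ X Y : Matrix (Fin (p + q)) (Fin (p + q)) ℂ,
    Matrix.trace X = 0 ∧ Xᴴ * Ipq p q = Ipq p q * X ∧
    Yᵀ * Ipq p q + Ipq p q * Y = 0 ∧
    W = Matrix.fromBlocks X (-Y) (Y.map (starRingEnd ℂ)) (X.map (starRingEnd ℂ))}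

open Module LinearMap

noncomputable section

section Involution
variable {K V : Type*} [Field K] [AddCommGroup V] [Module K V]

theorem disjoint_ker_sub_one_ker_add_one [NeZero (2 : K)] (σ : Module.End K V) :
    Disjoint (ker (σ - 1)) (ker (σ + 1)) := by
  rw [Submodule.disjoint_def]
  intro v h₁ h₂
  simp only [mem_ker, LinearMap.sub_apply, LinearMap.add_apply, Module.End.one_apply,
    sub_eq_zero] at h₁ h₂
  have : (2 : K) • v = 0 := by rw [two_smul]; nth_rw 1 [← h₁]; exact h₂
  exact (smul_eq_zero.1 this).resolve_left two_ne_zero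

theorem inf_ker_sub_one_sup_inf_ker_add_one [NeZero (2 : K)] {σ : Module.End K V}
    (hσ : σ * σ = 1) {M : Submodule K V} (hM : ∀ v ∈ M, σ v ∈ M) :
    M ⊓ ker (σ - 1) ⊔ M ⊓ ker (σ + 1) = M := by
  refine le_antisymm (sup_le inf_le_left inf_le_left) fun v hv => ?_
  have hσσ : ∀ w, σ (σ w) = w := fun w => by simpa using congr($hσ w)
  refine Submodule.mem_sup.2 ⟨(2 : K)⁻¹ • (v + σ v), ⟨M.smul_mem _ (M.add_mem hv (hM v hv)), ?_⟩,
    (2 : K)⁻¹ • (v - σ v), ⟨M.smul_mem _ (M.sub_mem hv (hM v hv)), ?_⟩, ?_⟩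
  · simp [hσσ, add_comm]
  · simp [hσσ]
  · rw [← smul_add, add_add_sub_cancel, ← two_smul K, smul_smul, inv_mul_cancel₀ two_ne_zero,
      one_smul]

theorem finrank_inf_ker_sub_one_add_finrank_inf_ker_add_one [NeZero (2 : K)]
    [FiniteDimensional K V] {σ : Module.End K V} (hσ : σ * σ = 1) {M : Submodule K V}
    (hM : ∀ v ∈ M, σ v ∈ M) :
    finrank K (M ⊓ ker (σ - 1) : Submodule K V) + finrank K (M ⊓ ker (σ + 1) : Submodule K V) =
      finrank K M := by
  rw [← Submodule.finrank_sup_add_finrank_inf_eq, inf_ker_sub_one_sup_inf_ker_add_one hσ hM,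
    ((disjoint_ker_sub_one_ker_add_one σ).mono inf_le_right inf_le_right).eq_bot, finrank_bot,
    add_zero]

theorem finrank_ker_sub_one_add_finrank_ker_add_one [NeZero (2 : K)] [FiniteDimensional K V]
    {σ : Module.End K V} (hσ : σ * σ = 1) :
    finrank K (ker (σ - 1)) + finrank K (ker (σ + 1)) = finrank K V := by
  have h := finrank_inf_ker_sub_one_add_finrank_inf_ker_add_one hσ (M := ⊤) fun _ _ => trivial
  rwa [top_inf_eq, top_inf_eq, finrank_top] at h

theorem finrank_inf_ker_add_one [FiniteDimensional K V] (p : Submodule K V) (f : V →ₗ[K] K)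
    {v : V} (hv : v ∈ p) (hfv : f v ≠ 0) :
    finrank K (p ⊓ ker f : Submodule K V) + 1 = finrank K p := by
  have hsurj : range (f.domRestrict p) = ⊤ := by
    refine eq_top_iff.2 fun c _ => ⟨(c / f v) • ⟨v, hv⟩, ?_⟩
    simp [div_mul_cancel₀ _ hfv]
  have := (f.domRestrict p).finrank_range_add_finrank_ker
  rw [hsurj, finrank_top, finrank_self, ker_domRestrict] at this
  rw [← Submodule.map_comap_subtype, Submodule.finrank_map_subtype_eq]
  omega

end Involution

section MatrixInvolutions
variable (m k ι : Type*)

def conjTransposeₗ : Matrix m k ℂ →ₗ[ℝ] Matrix k m ℂ where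
  toFun := conjTranspose
  map_add' := conjTranspose_add
  map_smul' c M := by ext; simp

def transposeₗ : Matrix m k ℂ →ₗ[ℝ] Matrix k m ℂ := (transposeLinearEquiv m k ℝ ℂ).toLinearMap

def hermitianSubmodule : Submodule ℝ (Matrix ι ι ℂ) := ker (conjTransposeₗ ι ι - 1)
def skewHermitianSubmodule : Submodule ℝ (Matrix ι ι ℂ) := ker (conjTransposeₗ ι ι + 1)
def symmetricSubmodule : Submodule ℝ (Matrix ι ι ℂ) := ker (transposeₗ ι ι - 1)
def skewSymmetricSubmodule : Submodule ℝ (Matrix ι ι ℂ) := ker (transposeₗ ι ι + 1)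

variable {m k ι}

@[simp] theorem mem_hermitianSubmodule {M : Matrix ι ι ℂ} :
    M ∈ hermitianSubmodule ι ↔ Mᴴ = M := by
  simp [hermitianSubmodule, conjTransposeₗ, sub_eq_zero]

@[simp] theorem mem_skewHermitianSubmodule {M : Matrix ι ι ℂ} :
    M ∈ skewHermitianSubmodule ι ↔ Mᴴ = -M := by
  simp [skewHermitianSubmodule, conjTransposeₗ, add_eq_zero_iff_eq_neg]

@[simp] theorem mem_symmetricSubmodule {M : Matrix ι ι ℂ} :
    M ∈ symmetricSubmodule ι ↔ Mᵀ = M := by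
  simp [symmetricSubmodule, transposeₗ, sub_eq_zero]

@[simp] theorem mem_skewSymmetricSubmodule {M : Matrix ι ι ℂ} :
    M ∈ skewSymmetricSubmodule ι ↔ Mᵀ = -M := by
  simp [skewSymmetricSubmodule, transposeₗ, add_eq_zero_iff_eq_neg]

theorem conjTransposeₗ_mul_self : conjTransposeₗ ι ι * conjTransposeₗ ι ι = 1 := by
  ext1 M; simp [conjTransposeₗ]

theorem transposeₗ_mul_self : transposeₗ ι ι * transposeₗ ι ι = 1 := by
  ext1 M; simp [transposeₗ]

theorem map_I_smul_skewHermitianSubmodule :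
    (skewHermitianSubmodule ι).map
      (DistribMulAction.toLinearEquiv ℝ (Matrix ι ι ℂ) (Units.mk0 Complex.I Complex.I_ne_zero) :
        Matrix ι ι ℂ →ₗ[ℝ] Matrix ι ι ℂ) =
      hermitianSubmodule ι := by
  ext M
  rw [Submodule.mem_map_equiv, mem_skewHermitianSubmodule, mem_hermitianSubmodule]
  simp [conjTranspose_smul, Units.smul_def]

def sym2ToMatrix : (Sym2 ι → ℂ) →ₗ[ℝ] Matrix ι ι ℂ where
  toFun f := of fun i j => f s(i, j)
  map_add' f g := by ext; simp
  map_smul' c f := by ext; simp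

theorem sym2ToMatrix_injective : Function.Injective (sym2ToMatrix (ι := ι)) := by
  intro f g h
  funext z
  induction z using Sym2.ind with
  | h i j => exact congr_fun₂ h i j

theorem range_sym2ToMatrix : range (sym2ToMatrix (ι := ι)) = symmetricSubmodule ι := by
  ext M
  rw [mem_symmetricSubmodule]
  constructor
  · rintro ⟨f, rfl⟩
    ext i j
    simp [sym2ToMatrix, Sym2.eq_swap]
  · intro hM
    refine ⟨Sym2.lift ⟨fun i j => M i j, fun i j => ?_⟩, ?_⟩
    · exact congr_fun₂ hM j i
    · ext i j; simp [sym2ToMatrix]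

section Finrank
variable [Fintype ι]

theorem finrank_hermitianSubmodule :
    finrank ℝ (hermitianSubmodule ι) = Fintype.card ι * Fintype.card ι := by
  have hsum : finrank ℝ (hermitianSubmodule ι) + finrank ℝ (skewHermitianSubmodule ι) =
      Fintype.card ι * Fintype.card ι * 2 := by
    have h := finrank_ker_sub_one_add_finrank_ker_add_one (conjTransposeₗ_mul_self (ι := ι))
    rwa [finrank_matrix, Complex.finrank_real_complex] at h
  have heq := LinearEquiv.finrank_map_eq
    (DistribMulAction.toLinearEquiv ℝ (Matrix ι ι ℂ) (Units.mk0 Complex.I Complex.I_ne_zero))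
    (skewHermitianSubmodule ι)
  rw [map_I_smul_skewHermitianSubmodule] at heq
  linarith

theorem finrank_symmetricSubmodule :
    finrank ℝ (symmetricSubmodule ι) = Fintype.card ι * (Fintype.card ι + 1) := by
  rw [← range_sym2ToMatrix, finrank_range_of_inj sym2ToMatrix_injective, finrank_pi_fintype]
  simp only [Complex.finrank_real_complex, Finset.sum_const, Finset.card_univ, Sym2.card,
    smul_eq_mul]
  rw [← Nat.add_one_mul_choose_eq, Nat.choose_one_right, Nat.mul_comm]

theorem finrank_skewSymmetricSubmodule :
    finrank ℝ (skewSymmetricSubmodule ι) = Fintype.card ι * (Fintype.card ι - 1) := by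
  have hsum : finrank ℝ (symmetricSubmodule ι) + finrank ℝ (skewSymmetricSubmodule ι) =
      Fintype.card ι * Fintype.card ι * 2 := by
    have h := finrank_ker_sub_one_add_finrank_ker_add_one (transposeₗ_mul_self (ι := ι))
    rwa [finrank_matrix, Complex.finrank_real_complex] at h
  rw [finrank_symmetricSubmodule] at hsum
  rcases Nat.eq_zero_or_pos (Fintype.card ι) with h | h
  · simpa [h] using hsum
  · obtain ⟨m, hm⟩ : ∃ m, Fintype.card ι = m + 1 := ⟨_, (Nat.succ_pred_eq_of_pos h).symm⟩
    rw [hm] at hsum ⊢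
    simp only [Nat.add_sub_cancel]
    nlinarith

end Finrank

end MatrixInvolutions

section QuaternionicMatrices
variable {n : Type*}

/-- The complex `2n × 2n` form of the quaternionic matrix `X + Y j`. -/
def quatMatrix (X Y : Matrix n n ℂ) : Matrix (n ⊕ n) (n ⊕ n) ℂ :=
  fromBlocks X (-Y) (Y.map (starRingEnd ℂ)) (X.map (starRingEnd ℂ))

theorem quatMatrix_inj {X Y X' Y' : Matrix n n ℂ} :
    quatMatrix X Y = quatMatrix X' Y' ↔ X = X' ∧ Y = Y' := by
  constructor
  · intro h
    obtain ⟨hX, hY, -, -⟩ := fromBlocks_inj.1 h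
    exact ⟨hX, neg_inj.1 hY⟩
  · rintro ⟨rfl, rfl⟩; rfl

theorem conjTranspose_quatMatrix (X Y : Matrix n n ℂ) :
    (quatMatrix X Y)ᴴ = quatMatrix Xᴴ (-Yᵀ) := by
  ext (i | i) (j | j) <;> simp [quatMatrix]

def quatMatrixₗ : (Matrix n n ℂ × Matrix n n ℂ) →ₗ[ℝ] Matrix (n ⊕ n) (n ⊕ n) ℂ where
  toFun XY := quatMatrix XY.1 XY.2
  map_add' _ _ := by ext (i | i) (j | j) <;> simp [quatMatrix, add_comm]
  map_smul' _ _ := by ext (i | i) (j | j) <;> simp [quatMatrix]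

theorem neg_quatMatrix (X Y : Matrix n n ℂ) : -quatMatrix X Y = quatMatrix (-X) (-Y) :=
  (map_neg quatMatrixₗ (X, Y)).symm

def quatSubmodule (P Q : Submodule ℝ (Matrix n n ℂ)) :
    Submodule ℝ (Matrix (n ⊕ n) (n ⊕ n) ℂ) :=
  range (quatMatrixₗ ∘ₗ P.subtype.prodMap Q.subtype)

theorem mem_quatSubmodule {P Q : Submodule ℝ (Matrix n n ℂ)} {W : Matrix (n ⊕ n) (n ⊕ n) ℂ} :
    W ∈ quatSubmodule P Q ↔ ∃ X ∈ P, ∃ Y ∈ Q, quatMatrix X Y = W := by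
  constructor
  · rintro ⟨⟨X, Y⟩, rfl⟩
    exact ⟨X, X.2, Y, Y.2, rfl⟩
  · rintro ⟨X, hX, Y, hY, rfl⟩
    exact ⟨(⟨X, hX⟩, ⟨Y, hY⟩), rfl⟩

theorem finrank_quatSubmodule [Fintype n] (P Q : Submodule ℝ (Matrix n n ℂ)) :
    finrank ℝ (quatSubmodule P Q) = finrank ℝ P + finrank ℝ Q := by
  rw [quatSubmodule, finrank_range_of_inj, finrank_prod]
  rintro ⟨X, Y⟩ ⟨X', Y'⟩ h
  obtain ⟨hX, hY⟩ := quatMatrix_inj.1 h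
  exact Prod.ext (Subtype.ext hX) (Subtype.ext hY)

end QuaternionicMatrices

section Signature
variable {n : Type*} [Fintype n] [DecidableEq n] (S : Matrix n n ℂ)

-- The conditions on `X` and `Y` in `𝔪` (see `mem_xSpace`, `mem_ySpace`), phrased through
-- `M ↦ S * M` so that for `S * S = 1` the dimensions are those of Hermitian, resp.
-- skew-symmetric, matrices.
def xSpace : Submodule ℝ (Matrix n n ℂ) :=
  (hermitianSubmodule n).comap (mulLeft ℝ S) ⊓ ker ((traceLinearMap n ℂ ℂ).restrictScalars ℝ)

def ySpace : Submodule ℝ (Matrix n n ℂ) :=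
  (skewSymmetricSubmodule n).comap (mulLeft ℝ S)

def mSubmodule : Submodule ℝ (Matrix (n ⊕ n) (n ⊕ n) ℂ) :=
  quatSubmodule (xSpace S) (ySpace S)

variable {S}

theorem mem_xSpace (hSh : Sᴴ = S) {X : Matrix n n ℂ} :
    X ∈ xSpace S ↔ trace X = 0 ∧ Xᴴ * S = S * X := by
  simp [xSpace, conjTranspose_mul, hSh, and_comm]

theorem mem_ySpace (hSt : Sᵀ = S) {Y : Matrix n n ℂ} :
    Y ∈ ySpace S ↔ Yᵀ * S + S * Y = 0 := by
  simp [ySpace, transpose_mul, hSt, eq_neg_iff_add_eq_zero]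

theorem finrank_comap_mulLeft (hS : S * S = 1) (K : Submodule ℝ (Matrix n n ℂ)) :
    finrank ℝ (K.comap (mulLeft ℝ S)) = finrank ℝ K := by
  let e : Matrix n n ℂ ≃ₗ[ℝ] Matrix n n ℂ :=
    LinearEquiv.ofInvolutive (mulLeft ℝ S) fun M => by simp [← mul_assoc, hS]
  exact (Submodule.comap_equiv_eq_map_symm e K).symm ▸ e.symm.finrank_map_eq K

theorem finrank_ySpace (hS : S * S = 1) :
    finrank ℝ (ySpace S) = Fintype.card n * (Fintype.card n - 1) := by
  rw [ySpace, finrank_comap_mulLeft hS, finrank_skewSymmetricSubmodule]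

theorem im_trace_eq_zero_of_hermitian_mul (hS : S * S = 1) (hSh : Sᴴ = S) {X : Matrix n n ℂ}
    (hX : (S * X)ᴴ = S * X) : (trace X).im = 0 := by
  refine Complex.conj_eq_iff_im.1 ?_
  calc star (trace X) = trace Xᴴ := (trace_conjTranspose X).symm
    _ = trace ((S * X)ᴴ * S) := by rw [conjTranspose_mul, hSh, mul_assoc, hS, mul_one]
    _ = trace X := by rw [hX, Matrix.trace_mul_comm, ← mul_assoc, hS, one_mul]

theorem finrank_xSpace [Nonempty n] (hS : S * S = 1) (hSh : Sᴴ = S) :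
    finrank ℝ (xSpace S) + 1 = Fintype.card n * Fintype.card n := by
  set H := (hermitianSubmodule n).comap (mulLeft ℝ S)
  have hxSpace : xSpace S = H ⊓ ker (Complex.reLm ∘ₗ (traceLinearMap n ℂ ℂ).restrictScalars ℝ) := by
    ext X
    simp only [xSpace, Submodule.mem_inf, mem_ker]
    refine and_congr_right fun hX => ?_
    have him := im_trace_eq_zero_of_hermitian_mul hS hSh (mem_hermitianSubmodule.1 hX)
    simp [Complex.ext_iff, him]
  have h1 : (1 : Matrix n n ℂ) ∈ H := by simp [H, hSh]
  rw [hxSpace, finrank_inf_ker_add_one H _ h1, finrank_comap_mulLeft hS, finrank_hermitianSubmodule]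
  simp [Fintype.card_ne_zero]

theorem conjTranspose_mem_xSpace (hS : S * S = 1) (hSh : Sᴴ = S) {X : Matrix n n ℂ}
    (hX : X ∈ xSpace S) : Xᴴ ∈ xSpace S := by
  obtain ⟨htr, hXS⟩ := (mem_xSpace hSh).1 hX
  refine (mem_xSpace hSh).2 ⟨by rw [trace_conjTranspose, htr, star_zero], ?_⟩
  calc Xᴴᴴ * S = S * S * X * S := by rw [conjTranspose_conjTranspose, hS, one_mul]
    _ = S * (Xᴴ * S) * S := by rw [hXS, mul_assoc S S X]
    _ = S * Xᴴ := by rw [← mul_assoc, mul_assoc _ S S, hS, mul_one]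

theorem neg_transpose_mem_ySpace (hS : S * S = 1) (hSt : Sᵀ = S) {Y : Matrix n n ℂ}
    (hY : Y ∈ ySpace S) : -Yᵀ ∈ ySpace S := by
  have hYS : Yᵀ * S = -(S * Y) := eq_neg_of_add_eq_zero_left ((mem_ySpace hSt).1 hY)
  refine (mem_ySpace hSt).2 ?_
  calc (-Yᵀ)ᵀ * S + S * -Yᵀ = -(S * S * Y * S) - S * Yᵀ * (S * S) := by
        rw [hS, one_mul, mul_one, transpose_neg, transpose_transpose, neg_mul, mul_neg,
          sub_eq_add_neg]
    _ = -(S * S * Y * S) - S * (Yᵀ * S) * S := by noncomm_ring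
    _ = 0 := by rw [hYS]; noncomm_ring

theorem conjTranspose_mem_mSubmodule (hS : S * S = 1) (hSh : Sᴴ = S) (hSt : Sᵀ = S)
    {W : Matrix (n ⊕ n) (n ⊕ n) ℂ} (hW : W ∈ mSubmodule S) : Wᴴ ∈ mSubmodule S := by
  obtain ⟨X, hX, Y, hY, rfl⟩ := mem_quatSubmodule.1 hW
  exact mem_quatSubmodule.2 ⟨Xᴴ, conjTranspose_mem_xSpace hS hSh hX, -Yᵀ,
    neg_transpose_mem_ySpace hS hSt hY, (conjTranspose_quatMatrix X Y).symm⟩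

theorem finrank_mSubmodule [Nonempty n] (hS : S * S = 1) (hSh : Sᴴ = S) :
    finrank ℝ (mSubmodule S) + 1 =
      Fintype.card n * Fintype.card n + Fintype.card n * (Fintype.card n - 1) := by
  rw [mSubmodule, finrank_quatSubmodule, add_right_comm, finrank_xSpace hS hSh, finrank_ySpace hS]

theorem mSubmodule_inf_skewHermitianSubmodule :
    mSubmodule S ⊓ skewHermitianSubmodule (n ⊕ n) =
      quatSubmodule (xSpace S ⊓ skewHermitianSubmodule n) (ySpace S ⊓ symmetricSubmodule n) := by
  ext W
  simp only [mSubmodule, Submodule.mem_inf, mem_quatSubmodule, mem_skewHermitianSubmodule,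
    mem_symmetricSubmodule]
  constructor
  · rintro ⟨⟨X, hX, Y, hY, rfl⟩, hW⟩
    rw [conjTranspose_quatMatrix, neg_quatMatrix, quatMatrix_inj, neg_inj] at hW
    exact ⟨X, ⟨hX, hW.1⟩, Y, ⟨hY, hW.2⟩, rfl⟩
  · rintro ⟨X, ⟨hX, hXh⟩, Y, ⟨hY, hYt⟩, rfl⟩
    refine ⟨⟨X, hX, Y, hY, rfl⟩, ?_⟩
    rw [conjTranspose_quatMatrix, neg_quatMatrix, hXh, hYt]

end Signature

section Blocks
variable {α β : Type*} [Fintype α] [Fintype β]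

theorem trace_reindex_self {m n : Type*} [Fintype m] [Fintype n] (e : m ≃ n)
    (M : Matrix m m ℂ) : trace (reindex e e M) = trace M :=
  e.symm.sum_comp fun i => M i i

theorem eq_zero_of_eq_neg {m : Type*} {A : Matrix m m ℂ} (h : A = -A) : A = 0 := by
  ext i j; exact CharZero.eq_neg_self_iff.1 (congr_fun₂ h i j)

theorem trace_fromBlocks_zero_zero (B : Matrix α β ℂ) (C : Matrix β α ℂ) :
    trace (fromBlocks 0 B C 0) = 0 := by
  simp [Matrix.trace, Fintype.sum_sum_type]

variable [DecidableEq α] [DecidableEq β]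

theorem offDiagBlocks_iff_conjTranspose {N : Matrix (α ⊕ β) (α ⊕ β) ℂ} :
    (trace N = 0 ∧ Nᴴ * fromBlocks 1 0 0 (-1) = fromBlocks 1 0 0 (-1) * N) ∧ Nᴴ = -N ↔
      N = fromBlocks 0 N.toBlocks₁₂ (-N.toBlocks₁₂ᴴ) 0 := by
  constructor
  · rintro ⟨⟨-, hN⟩, hN'⟩
    rw [← fromBlocks_toBlocks N] at hN hN'
    simp only [fromBlocks_conjTranspose, fromBlocks_multiply, fromBlocks_neg, fromBlocks_inj,
      Matrix.mul_one, Matrix.mul_zero, Matrix.zero_mul, Matrix.one_mul, Matrix.mul_neg,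
      Matrix.neg_mul, add_zero, zero_add, neg_inj] at hN hN'
    conv_lhs => rw [← fromBlocks_toBlocks N]
    rw [fromBlocks_inj]
    exact ⟨eq_zero_of_eq_neg (hN.1.symm.trans hN'.1), rfl, by rw [hN.2.2.1, neg_neg],
      eq_zero_of_eq_neg (hN.2.2.2.symm.trans hN'.2.2.2)⟩
  · intro h
    generalize N.toBlocks₁₂ = B at h
    subst h
    simp [trace_fromBlocks_zero_zero, fromBlocks_conjTranspose, fromBlocks_multiply,
      fromBlocks_neg]

theorem offDiagBlocks_iff_transpose {N : Matrix (α ⊕ β) (α ⊕ β) ℂ} :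
    Nᵀ * fromBlocks 1 0 0 (-1) + fromBlocks 1 0 0 (-1) * N = 0 ∧ Nᵀ = N ↔
      N = fromBlocks 0 N.toBlocks₁₂ N.toBlocks₁₂ᵀ 0 := by
  constructor
  · rintro ⟨hN, hN'⟩
    rw [← fromBlocks_toBlocks N] at hN hN'
    simp only [fromBlocks_transpose, fromBlocks_multiply, fromBlocks_add, fromBlocks_inj,
      ← fromBlocks_zero, Matrix.mul_one, Matrix.mul_zero, Matrix.zero_mul, Matrix.one_mul,
      Matrix.mul_neg, Matrix.neg_mul, add_zero, zero_add] at hN hN'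
    obtain ⟨hA, -, -, hD⟩ := hN
    obtain ⟨hA', -, hC, hD'⟩ := hN'
    rw [hA'] at hA
    rw [hD'] at hD
    conv_lhs => rw [← fromBlocks_toBlocks N]
    rw [fromBlocks_inj]
    exact ⟨eq_zero_of_eq_neg (eq_neg_of_add_eq_zero_left hA), rfl, hC.symm,
      eq_zero_of_eq_neg (neg_add_eq_zero.1 hD)⟩
  · intro h
    generalize N.toBlocks₁₂ = B at h
    subst h
    simp [fromBlocks_transpose, fromBlocks_multiply, fromBlocks_add]

variable {n : Type*} [Fintype n] [DecidableEq n] (e : α ⊕ β ≃ n)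

theorem finrank_eq_of_reindex_mem_iff_offDiagBlocks (P : Submodule ℝ (Matrix n n ℂ))
    (L : Matrix α β ℂ →ₗ[ℝ] Matrix β α ℂ)
    (hP : ∀ N, reindexAlgEquiv ℝ ℂ e N ∈ P ↔ N = fromBlocks 0 N.toBlocks₁₂ (L N.toBlocks₁₂) 0) :
    finrank ℝ P = Fintype.card α * Fintype.card β * 2 := by
  set r := reindexAlgEquiv ℝ ℂ e
  let ψ : Matrix α β ℂ →ₗ[ℝ] Matrix (α ⊕ β) (α ⊕ β) ℂ :=
    { toFun B := fromBlocks 0 B (L B) 0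
      map_add' B B' := by simp [fromBlocks_add]
      map_smul' c B := by simp [fromBlocks_smul] }
  have hinj : Function.Injective (r.toLinearMap ∘ₗ ψ) := fun B B' h =>
    (fromBlocks_inj.1 (r.injective h)).2.1
  have hrange : P = range (r.toLinearMap ∘ₗ ψ) := by
    ext X
    obtain ⟨N, rfl⟩ := r.surjective X
    rw [hP]
    constructor
    · intro h
      exact ⟨N.toBlocks₁₂, congr_arg r h.symm⟩
    · rintro ⟨B, hB⟩
      obtain rfl : fromBlocks 0 B (L B) 0 = N := r.injective hB
      simp
  rw [hrange, finrank_range_of_inj hinj, finrank_matrix, Complex.finrank_real_complex]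

theorem finrank_xSpace_inf_skewHermitianSubmodule :
    finrank ℝ (xSpace (reindex e e (fromBlocks 1 0 0 (-1))) ⊓ skewHermitianSubmodule n :
      Submodule ℝ (Matrix n n ℂ)) = Fintype.card α * Fintype.card β * 2 := by
  set r := reindexAlgEquiv ℝ ℂ e
  have hJ : (reindex e e (fromBlocks 1 0 0 (-1) : Matrix (α ⊕ β) (α ⊕ β) ℂ))ᴴ =
      reindex e e (fromBlocks 1 0 0 (-1)) := by
    simp [fromBlocks_conjTranspose]
  refine finrank_eq_of_reindex_mem_iff_offDiagBlocks e _ (-conjTransposeₗ α β) fun N => ?_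
  rw [show (-conjTransposeₗ α β) N.toBlocks₁₂ = -N.toBlocks₁₂ᴴ from rfl,
    ← offDiagBlocks_iff_conjTranspose, Submodule.mem_inf, mem_xSpace hJ, mem_skewHermitianSubmodule]
  show (trace (reindex e e N) = 0 ∧ r Nᴴ * r _ = r _ * r N) ∧ r Nᴴ = -r N ↔ _
  rw [trace_reindex_self, ← map_mul, ← map_mul, ← map_neg, r.injective.eq_iff, r.injective.eq_iff]

theorem finrank_ySpace_inf_symmetricSubmodule :
    finrank ℝ (ySpace (reindex e e (fromBlocks 1 0 0 (-1))) ⊓ symmetricSubmodule n :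
      Submodule ℝ (Matrix n n ℂ)) = Fintype.card α * Fintype.card β * 2 := by
  set r := reindexAlgEquiv ℝ ℂ e
  have hJ : (reindex e e (fromBlocks 1 0 0 (-1) : Matrix (α ⊕ β) (α ⊕ β) ℂ))ᵀ =
      reindex e e (fromBlocks 1 0 0 (-1)) := by
    simp [fromBlocks_transpose]
  refine finrank_eq_of_reindex_mem_iff_offDiagBlocks e _ (transposeₗ α β) fun N => ?_
  rw [show transposeₗ α β N.toBlocks₁₂ = N.toBlocks₁₂ᵀ from rfl, ← offDiagBlocks_iff_transpose,
    Submodule.mem_inf, mem_ySpace hJ, mem_symmetricSubmodule]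
  show r Nᵀ * r _ + r _ * r N = 0 ∧ r Nᵀ = r N ↔ _
  rw [← map_mul, ← map_mul, ← map_add, map_eq_zero_iff _ r.injective, r.injective.eq_iff]

end Blocks

section TracePairing
variable {m : Type*} [Fintype m]

open scoped ComplexOrder in
theorem re_trace_mul_conjTranspose_pos {A : Matrix m m ℂ} (hA : A ≠ 0) :
    0 < (trace (A * Aᴴ)).re := by
  have h0 : 0 ≤ trace (A * Aᴴ) := (posSemidef_self_mul_conjTranspose A).trace_nonneg
  have hne : trace (A * Aᴴ) ≠ 0 := mt trace_mul_conjTranspose_self_eq_zero_iff.1 hA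
  exact (Complex.pos_iff.1 (h0.lt_of_ne hne.symm)).1

theorem re_trace_mul_eq_zero {A B : Matrix m m ℂ} (hA : Aᴴ = A) (hB : Bᴴ = -B) :
    (trace (A * B)).re = 0 := by
  have h : star (trace (A * B)) = -trace (A * B) := by
    rw [← trace_conjTranspose, conjTranspose_mul, hA, hB, neg_mul, trace_neg,
      Matrix.trace_mul_comm]
  have := congr_arg Complex.re h
  rw [Complex.star_def, Complex.conj_re, Complex.neg_re] at this
  linarith

theorem re_trace_mul_self_pos {A : Matrix m m ℂ} (hA : Aᴴ = A) (h : A ≠ 0) :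
    0 < (trace (A * A)).re := by
  simpa only [hA] using re_trace_mul_conjTranspose_pos h

theorem re_trace_mul_self_neg {A : Matrix m m ℂ} (hA : Aᴴ = -A) (h : A ≠ 0) :
    (trace (A * A)).re < 0 := by
  have := re_trace_mul_conjTranspose_pos h
  rw [hA, Matrix.mul_neg, trace_neg, Complex.neg_re] at this
  linarith

end TracePairing

section Ipq
variable (p q : ℕ)

theorem Ipq_eq_reindex :
    Ipq p q = reindex finSumFinEquiv finSumFinEquiv (fromBlocks 1 0 0 (-1)) := by
  rw [← Equiv.symm_apply_eq, reindex_symm]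
  ext (i | i) (j | j) <;> simp [Ipq, diagonal, one_apply, Fin.ext_iff, apply_ite] <;> omega

theorem Ipq_mul_self : Ipq p q * Ipq p q = 1 := by
  rw [Ipq, diagonal_mul_diagonal, ← diagonal_one]
  congr 1; funext i; split_ifs <;> simp

theorem conjTranspose_Ipq : (Ipq p q)ᴴ = Ipq p q := by
  rw [Ipq, diagonal_conjTranspose]
  congr 1; funext i; rw [Pi.star_apply]; split_ifs <;> simp

theorem transpose_Ipq : (Ipq p q)ᵀ = Ipq p q :=
  diagonal_transpose _

theorem coe_mSubmodule_Ipq : (mSubmodule (Ipq p q) : Set _) = mSp p q := by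
  ext W
  simp only [SetLike.mem_coe, mSubmodule, mem_quatSubmodule, mem_xSpace (conjTranspose_Ipq p q),
    mem_ySpace (transpose_Ipq p q), mSp, Set.mem_ofPred_eq, quatMatrix]
  constructor
  · rintro ⟨X, ⟨hX, hX'⟩, Y, hY, rfl⟩
    exact ⟨X, Y, hX, hX', hY, rfl⟩
  · rintro ⟨X, Y, hX, hX', hY, rfl⟩
    exact ⟨X, ⟨hX, hX'⟩, Y, hY, rfl⟩

theorem finrank_mSubmodule_Ipq_inf_skewHermitianSubmodule :
    finrank ℝ (mSubmodule (Ipq p q) ⊓ skewHermitianSubmodule _ : Submodule ℝ _) = 4 * p * q := by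
  rw [mSubmodule_inf_skewHermitianSubmodule, finrank_quatSubmodule, Ipq_eq_reindex,
    finrank_xSpace_inf_skewHermitianSubmodule, finrank_ySpace_inf_symmetricSubmodule,
    Fintype.card_fin, Fintype.card_fin]
  ring

end Ipq
end

theorem dimension_arith {p q M Vp Vm : ℕ} (hp : 1 ≤ p) (hq : 1 ≤ q)
    (hM : M + 1 = (p + q) * (p + q) + (p + q) * (p + q - 1)) (hsum : Vp + Vm = M)
    (hVm : Vm = 4 * p * q) :
    M = (2 * (p + q) + 1) * (p + q - 1) ∧ Vp = p * (2 * p - 1) + q * (2 * q - 1) - 1 := by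
  obtain ⟨a, rfl⟩ : ∃ a, p = a + 1 := ⟨p - 1, by omega⟩
  obtain ⟨b, rfl⟩ : ∃ b, q = b + 1 := ⟨q - 1, by omega⟩
  simp only [show a + 1 + (b + 1) - 1 = a + b + 1 by omega,
    show 2 * (a + 1) - 1 = 2 * a + 1 by omega, show 2 * (b + 1) - 1 = 2 * b + 1 by omega] at *
  refine ⟨by nlinarith, ?_⟩
  have : (a + 1) * (2 * a + 1) + (b + 1) * (2 * b + 1) = Vp + 1 := by nlinarith
  omega

/-- The form `B(V,W) = ½·Re tr(V·W)` on `𝔪` is nondegenerate of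
signature `(p(2p−1) + q(2q−1) − 1, 4pq)`; in particular `𝔪` has real dimension
`(2n+1)(n−1)` for `n = p + q`. -/
theorem stmt12 (p q : ℕ) (hp : 1 ≤ p) (hq : 1 ≤ q)
    (B : Matrix (Fin (p + q) ⊕ Fin (p + q)) (Fin (p + q) ⊕ Fin (p + q)) ℂ →
      Matrix (Fin (p + q) ⊕ Fin (p + q)) (Fin (p + q) ⊕ Fin (p + q)) ℂ → ℝ)
    (hB : B = fun V W => (Matrix.trace (V * W)).re / 2) :
    -- `𝔪` has real dimension `(2n+1)(n−1)`
    Module.finrank ℝ ↥(Submodule.span ℝ (mSp p q)) = (2 * (p + q) + 1) * (p + q - 1) ∧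
    -- `B` is nondegenerate on `𝔪`
    (∀ X ∈ mSp p q, (∀ Y ∈ mSp p q, B X Y = 0) → X = 0) ∧
    -- signature `(p(2p−1) + q(2q−1) − 1, 4pq)`
    (∃ Vp Vm : Submodule ℝ
        (Matrix (Fin (p + q) ⊕ Fin (p + q)) (Fin (p + q) ⊕ Fin (p + q)) ℂ),
      (Vp : Set _) ⊆ mSp p q ∧
      (Vm : Set _) ⊆ mSp p q ∧
      (∀ X ∈ mSp p q, ∃ a ∈ Vp, ∃ b ∈ Vm, X = a + b) ∧
      (∀ X, X ∈ Vp → X ∈ Vm → X = 0) ∧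
      (∀ a ∈ Vp, ∀ b ∈ Vm, B a b = 0) ∧
      (∀ a ∈ Vp, a ≠ 0 → 0 < B a a) ∧
      (∀ b ∈ Vm, b ≠ 0 → B b b < 0) ∧
      Module.finrank ℝ ↥Vp = p * (2 * p - 1) + q * (2 * q - 1) - 1 ∧
      Module.finrank ℝ ↥Vm = 4 * p * q) := by
  subst hB
  beta_reduce
  have : Nonempty (Fin (p + q)) := ⟨⟨0, by omega⟩⟩
  rw [← coe_mSubmodule_Ipq, Submodule.span_eq]
  set 𝔪 := mSubmodule (Ipq p q)
  have hstar : ∀ W ∈ 𝔪, Wᴴ ∈ 𝔪 := fun W =>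
    conjTranspose_mem_mSubmodule (Ipq_mul_self p q) (conjTranspose_Ipq p q) (transpose_Ipq p q)
  have hsup := inf_ker_sub_one_sup_inf_ker_add_one conjTransposeₗ_mul_self hstar
  have hdisj := (disjoint_ker_sub_one_ker_add_one (conjTransposeₗ _ _)).mono
    (inf_le_right (a := 𝔪)) (inf_le_right (a := 𝔪))
  have hdim𝔪 := finrank_mSubmodule (Ipq_mul_self p q) (conjTranspose_Ipq p q)
  rw [Fintype.card_fin] at hdim𝔪
  have hsum : finrank ℝ (𝔪 ⊓ hermitianSubmodule _ : Submodule ℝ _) +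
      finrank ℝ (𝔪 ⊓ skewHermitianSubmodule _ : Submodule ℝ _) = finrank ℝ 𝔪 :=
    finrank_inf_ker_sub_one_add_finrank_inf_ker_add_one conjTransposeₗ_mul_self hstar
  have hdimVm := finrank_mSubmodule_Ipq_inf_skewHermitianSubmodule p q
  obtain ⟨hdim, hdimVp⟩ := dimension_arith hp hq hdim𝔪 hsum hdimVm
  refine ⟨hdim, fun X hX hB => by_contra fun hX0 => ?_, 𝔪 ⊓ hermitianSubmodule _,
    𝔪 ⊓ skewHermitianSubmodule _, fun W hW => hW.1, fun W hW => hW.1, fun X hX => ?_,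
    Submodule.disjoint_def.1 hdisj, fun a ha b hb => ?_, fun a ha ha0 => ?_, fun b hb hb0 => ?_,
    hdimVp, hdimVm⟩
  · linarith [hB _ (hstar X hX), re_trace_mul_conjTranspose_pos hX0]
  · obtain ⟨a, ha, b, hb, rfl⟩ := Submodule.mem_sup.1 (hsup ▸ hX)
    exact ⟨a, ha, b, hb, rfl⟩
  · rw [re_trace_mul_eq_zero (mem_hermitianSubmodule.1 ha.2) (mem_skewHermitianSubmodule.1 hb.2),
      zero_div]
  · exact half_pos (re_trace_mul_self_pos (mem_hermitianSubmodule.1 ha.2) ha0)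
  · exact div_neg_of_neg_of_pos (re_trace_mul_self_neg (mem_skewHermitianSubmodule.1 hb.2) hb0)
      two_pos
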